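/- Let γ ∈ [1,∞) and let n : ℕ → ℕ satisfy n(N) ≥ N + 1 for all N and n(N)/N → γ as N → ∞. Then there exist a constant C > 0 and an integer N₀ such that for all N ≥ N₀, 1 ≤ σ̃_{n(N)−1,N−1} / σ̃_{n(N)−2,N} ≤ 1 + C/N. -/

import Mathlib

/-! With `s = x + 1/2`, `t = y + 1/2` and `w = √(st)` one has `σ̃(x, y)⁶ = (s + t + 2w)⁴ / w²`.
Writing `m = n(N) - 2`, `k = N - 1`, the ratio is `σ̃(m + 1, k) / σ̃(m, k + 1)`, and both terms have
the same `s + t = c`, with products `u² = (m + 3/2)(k + 1/2) ≤ v² = (m + 1/2)(k + 3/2) ≤ c²/4`.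
Since `w ↦ (c + 2w)² / w` decreases on `(0, c/2]`, the ratio is at least `1`; since `(c + 2w)⁴`
increases, its sixth power is at most `v² / u² ≤ 1 + 1/(k + 1/2)`, which is `≤ 1 + 2/N`. -/

open Real Filter

/-- σ̃_{m,k} = (√(m+1/2) + √(k+1/2)) · (1/√(m+1/2) + 1/√(k+1/2))^{1/3}. -/
noncomputable def sigt (m k : ℝ) : ℝ :=
  (Real.sqrt (m + 1 / 2) + Real.sqrt (k + 1 / 2)) *
    (1 / Real.sqrt (m + 1 / 2) + 1 / Real.sqrt (k + 1 / 2)) ^ ((1 : ℝ) / 3)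

lemma sigt_pos {x y : ℝ} (hx : 0 < x + 1 / 2) (hy : 0 < y + 1 / 2) : 0 < sigt x y := by
  have := Real.sqrt_pos.2 hx
  have := Real.sqrt_pos.2 hy
  unfold sigt
  positivity

lemma sigt_pow_six_mul {x y : ℝ} (hx : 0 < x + 1 / 2) (hy : 0 < y + 1 / 2) :
    sigt x y ^ 6 * ((x + 1 / 2) * (y + 1 / 2)) =
      (x + y + 1 + 2 * √((x + 1 / 2) * (y + 1 / 2))) ^ 4 := by
  rw [Real.sqrt_mul hx.le]
  set s := √(x + 1 / 2)
  set t := √(y + 1 / 2)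
  have hs : 0 < s := Real.sqrt_pos.2 hx
  have ht : 0 < t := Real.sqrt_pos.2 hy
  have hroot : ((1 / s + 1 / t) ^ ((1 : ℝ) / 3)) ^ 6 = (1 / s + 1 / t) ^ 2 := by
    rw [← Real.rpow_natCast _ 6, ← Real.rpow_mul (by positivity)]
    norm_num
  have hs2 : s ^ 2 = x + 1 / 2 := Real.sq_sqrt hx.le
  have ht2 : t ^ 2 = y + 1 / 2 := Real.sq_sqrt hy.le
  have hsig : sigt x y = (s + t) * (1 / s + 1 / t) ^ ((1 : ℝ) / 3) := rfl
  calc sigt x y ^ 6 * ((x + 1 / 2) * (y + 1 / 2))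
      = (s + t) ^ 6 * ((1 / s + 1 / t) ^ ((1 : ℝ) / 3)) ^ 6 * (s * t) ^ 2 := by
        rw [hsig, ← hs2, ← ht2]; ring
    _ = (s ^ 2 + t ^ 2 + 2 * (s * t)) ^ 4 := by
        rw [hroot]; field_simp; ring
    _ = (x + y + 1 + 2 * (s * t)) ^ 4 := by rw [hs2, ht2]; ring

lemma add_two_mul_pow_four_mul_sq_le {c u v : ℝ} (hu : 0 < u) (huv : u ≤ v) (hvc : 2 * v ≤ c) :
    (c + 2 * v) ^ 4 * u ^ 2 ≤ (c + 2 * u) ^ 4 * v ^ 2 := by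
  have hprod : 4 * u * v ≤ c ^ 2 := by nlinarith
  -- `(c + 2u)² v - (c + 2v)² u = (v - u)(c² - 4uv)`
  have h : (c + 2 * v) ^ 2 * u ≤ (c + 2 * u) ^ 2 * v := by
    nlinarith [mul_nonneg (sub_nonneg.2 huv) (sub_nonneg.2 hprod)]
  calc (c + 2 * v) ^ 4 * u ^ 2 = ((c + 2 * v) ^ 2 * u) ^ 2 := by ring
    _ ≤ ((c + 2 * u) ^ 2 * v) ^ 2 := pow_le_pow_left₀ (by positivity) h 2
    _ = (c + 2 * u) ^ 4 * v ^ 2 := by ring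

section Shift

variable {m k : ℝ}

lemma sigt_add_one_left_pow_six_mul (hk : 0 < k + 1 / 2) (hkm : k ≤ m) :
    sigt (m + 1) k ^ 6 * ((m + 3 / 2) * (k + 1 / 2)) =
      (m + k + 2 + 2 * √((m + 3 / 2) * (k + 1 / 2))) ^ 4 := by
  convert sigt_pow_six_mul (x := m + 1) (y := k) (by linarith) hk using 3 <;> ring_nf

lemma sigt_add_one_right_pow_six_mul (hk : 0 < k + 1 / 2) (hkm : k ≤ m) :
    sigt m (k + 1) ^ 6 * ((m + 1 / 2) * (k + 3 / 2)) =
      (m + k + 2 + 2 * √((m + 1 / 2) * (k + 3 / 2))) ^ 4 := by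
  convert sigt_pow_six_mul (x := m) (y := k + 1) (by linarith) (by linarith) using 3 <;> ring_nf

lemma sigt_le_sigt_add_one_left (hk : 0 < k + 1 / 2) (hkm : k ≤ m) :
    sigt m (k + 1) ≤ sigt (m + 1) k := by
  have hA := sigt_add_one_left_pow_six_mul hk hkm
  have hB := sigt_add_one_right_pow_six_mul hk hkm
  have hPQ : (m + 3 / 2) * (k + 1 / 2) ≤ (m + 1 / 2) * (k + 3 / 2) := by nlinarith
  have hQc : 2 ^ 2 * ((m + 1 / 2) * (k + 3 / 2)) ≤ (m + k + 2) ^ 2 := by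
    nlinarith [sq_nonneg (m - k - 1)]
  set P := (m + 3 / 2) * (k + 1 / 2)
  set Q := (m + 1 / 2) * (k + 3 / 2)
  have hP : 0 < P := mul_pos (by linarith) hk
  have hQ : 0 < Q := mul_pos (by linarith) (by linarith)
  have huv : √P ≤ √Q := Real.sqrt_le_sqrt hPQ
  have hvc : 2 * √Q ≤ m + k + 2 := by
    refine (pow_le_pow_iff_left₀ (by positivity) (by linarith) two_ne_zero).1 ?_
    rwa [mul_pow, Real.sq_sqrt hQ.le]
  have key := add_two_mul_pow_four_mul_sq_le (Real.sqrt_pos.2 hP) huv hvc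
  rw [Real.sq_sqrt hP.le, Real.sq_sqrt hQ.le, ← hA, ← hB] at key
  have h6 : sigt m (k + 1) ^ 6 ≤ sigt (m + 1) k ^ 6 :=
    le_of_mul_le_mul_right (by linarith) (mul_pos hP hQ)
  exact (pow_le_pow_iff_left₀ (sigt_pos (by linarith) (by linarith)).le
    (sigt_pos (by linarith) hk).le (by norm_num)).1 h6

lemma sigt_add_one_left_pow_six_mul_le (hk : 0 < k + 1 / 2) (hkm : k ≤ m) :
    sigt (m + 1) k ^ 6 * (k + 1 / 2) ≤ sigt m (k + 1) ^ 6 * (k + 3 / 2) := by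
  have hA := sigt_add_one_left_pow_six_mul hk hkm
  have hB := sigt_add_one_right_pow_six_mul hk hkm
  have hPQ : (m + 3 / 2) * (k + 1 / 2) ≤ (m + 1 / 2) * (k + 3 / 2) := by nlinarith
  have hQle : (m + 1 / 2) * (k + 3 / 2) ≤ (m + 3 / 2) * (k + 3 / 2) := by nlinarith
  set P := (m + 3 / 2) * (k + 1 / 2)
  set Q := (m + 1 / 2) * (k + 3 / 2)
  have hsqrt : √P ≤ √Q := Real.sqrt_le_sqrt hPQ
  refine le_of_mul_le_mul_left ?_ (by linarith : 0 < m + 3 / 2)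
  calc (m + 3 / 2) * (sigt (m + 1) k ^ 6 * (k + 1 / 2))
      = (m + k + 2 + 2 * √P) ^ 4 := by rw [← hA]; ring
    _ ≤ (m + k + 2 + 2 * √Q) ^ 4 :=
        pow_le_pow_left₀ (add_nonneg (by linarith) (by positivity)) (by linarith) 4
    _ = sigt m (k + 1) ^ 6 * Q := hB.symm
    _ ≤ sigt m (k + 1) ^ 6 * ((m + 3 / 2) * (k + 3 / 2)) := by gcongr
    _ = (m + 3 / 2) * (sigt m (k + 1) ^ 6 * (k + 3 / 2)) := by ring

lemma one_le_sigt_div_sigt (hk : 0 < k + 1 / 2) (hkm : k ≤ m) :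
    1 ≤ sigt (m + 1) k / sigt m (k + 1) :=
  (one_le_div (sigt_pos (by linarith) (by linarith))).2 (sigt_le_sigt_add_one_left hk hkm)

lemma sigt_div_sigt_le (hk : 0 < k + 1 / 2) (hkm : k ≤ m) :
    sigt (m + 1) k / sigt m (k + 1) ≤ 1 + 1 / (k + 1 / 2) := by
  have hB := sigt_pos (x := m) (y := k + 1) (by linarith) (by linarith)
  calc sigt (m + 1) k / sigt m (k + 1)
      ≤ (sigt (m + 1) k / sigt m (k + 1)) ^ 6 :=
        le_self_pow₀ (one_le_sigt_div_sigt hk hkm) (by norm_num)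
    _ ≤ 1 + 1 / (k + 1 / 2) := by
        have hrhs : (1 + 1 / (k + 1 / 2)) * sigt m (k + 1) ^ 6 =
            sigt m (k + 1) ^ 6 * (k + 3 / 2) / (k + 1 / 2) := by
          rw [show k + 3 / 2 = k + 1 / 2 + 1 by ring, mul_add_one, add_div,
            mul_div_cancel_right₀ _ hk.ne']
          ring
        rw [div_pow, div_le_iff₀ (by positivity), hrhs, le_div_iff₀ hk]
        exact sigt_add_one_left_pow_six_mul_le hk hkm

end Shift

theorem stmt_8_general (n : ℕ → ℕ) (hn : ∀ N, N + 1 ≤ n N) :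
    ∃ C > 0, ∃ N₀ : ℕ, ∀ N ≥ N₀,
      1 ≤ sigt ((n N : ℝ) - 1) ((N : ℝ) - 1) / sigt ((n N : ℝ) - 2) (N : ℝ) ∧
      sigt ((n N : ℝ) - 1) ((N : ℝ) - 1) / sigt ((n N : ℝ) - 2) (N : ℝ) ≤ 1 + C / N := by
  refine ⟨2, two_pos, 1, fun N hN => ?_⟩
  have hN1 : (1 : ℝ) ≤ N := by exact_mod_cast hN
  have hk : 0 < (N : ℝ) - 1 + 1 / 2 := by linarith
  have hkm : (N : ℝ) - 1 ≤ (n N : ℝ) - 2 := by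
    have : (N : ℝ) + 1 ≤ n N := by exact_mod_cast hn N
    linarith
  have hshift : sigt ((n N : ℝ) - 2 + 1) ((N : ℝ) - 1) / sigt ((n N : ℝ) - 2) ((N : ℝ) - 1 + 1) =
      sigt ((n N : ℝ) - 1) ((N : ℝ) - 1) / sigt ((n N : ℝ) - 2) (N : ℝ) := by ring_nf
  have hC : 1 + 1 / ((N : ℝ) - 1 + 1 / 2) ≤ 1 + 2 / N := by
    gcongr 1 + ?_
    rw [div_le_div_iff₀ hk (by linarith)]
    linarith
  rw [← hshift]
  exact ⟨one_le_sigt_div_sigt hk hkm, (sigt_div_sigt_le hk hkm).trans hC⟩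

theorem stmt_8 (γ : ℝ) (hγ : 1 ≤ γ) (n : ℕ → ℕ) (hn : ∀ N, N + 1 ≤ n N)
    (hlim : Tendsto (fun N : ℕ => (n N : ℝ) / (N : ℝ)) atTop (nhds γ)) :
    ∃ C > 0, ∃ N₀ : ℕ, ∀ N ≥ N₀,
      1 ≤ sigt ((n N : ℝ) - 1) ((N : ℝ) - 1) / sigt ((n N : ℝ) - 2) (N : ℝ) ∧
      sigt ((n N : ℝ) - 1) ((N : ℝ) - 1) / sigt ((n N : ℝ) - 2) (N : ℝ) ≤ 1 + C / N :=
  stmt_8_general n hn
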